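/- arXiv:2205.11290 — 2 statements merged into one kernel-verified Lean document; each statement's English description precedes it below -/
import Mathlib

section
/- A finitely generated virtually cyclic torsion-free group that is infinite is infinite cyclic, i.e. isomorphic to ℤ. -/
/-!
Pass to the normal core `N` of the cyclic subgroup of finite index, generated by `n`. For
`g ∈ P` some power `g ^ k = n ^ t` lies in `N`, so `(g n g⁻¹) ^ t = n ^ t`; as `g n g⁻¹` and `n`
commute and `P` is torsion-free, `g n g⁻¹ = n`. Thus `N` is central, the center has finite index,
and the transfer `P → Z(P)`, `g ↦ g ^ [P : Z(P)]`, is an injective homomorphism, so `P` is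
abelian. Then `g ↦ g ^ [P : N]` embeds `P` into the cyclic group `N`, and an infinite cyclic
group is `ℤ`.
-/

open Subgroup

namespace TorsionFree

variable {G : Type*} [Group G]

theorem eq_one_of_pow_eq_one (htf : ∀ g : G, g ≠ 1 → ¬IsOfFinOrder g) {g : G} {k : ℕ}
    (hk : k ≠ 0) (h : g ^ k = 1) : g = 1 :=
  by_contra fun hg ↦ htf g hg (isOfFinOrder_iff_pow_eq_one.mpr ⟨k, Nat.pos_of_ne_zero hk, h⟩)

theorem eq_of_commute_of_zpow_eq (htf : ∀ g : G, g ≠ 1 → ¬IsOfFinOrder g) {x y : G}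
    (hxy : Commute x y) {t : ℤ} (ht : t ≠ 0) (h : x ^ t = y ^ t) : x = y := by
  have hpow : (x * y⁻¹) ^ t = 1 := by
    rw [hxy.inv_right.mul_zpow, inv_zpow, h, mul_inv_cancel]
  by_contra hne
  exact htf _ (mul_inv_eq_one.not.mpr hne) (isOfFinOrder_iff_zpow_eq_one.mpr ⟨t, ht, hpow⟩)

theorem le_center_of_isCyclic (htf : ∀ g : G, g ≠ 1 → ¬IsOfFinOrder g) (N : Subgroup G)
    [N.Normal] [N.FiniteIndex] [IsCyclic N] : N ≤ center G := by
  obtain ⟨n, rfl⟩ := N.isCyclic_iff_exists_zpowers_eq_top.mp ‹_›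
  refine (zpowers_le).mpr (mem_center_iff.mpr fun g ↦ ?_)
  obtain ⟨t, ht⟩ := mem_zpowers_iff.mp ((zpowers n).pow_index_mem g)
  obtain ⟨j, hj⟩ := mem_zpowers_iff.mp (Normal.conj_mem inferInstance n (mem_zpowers n) g)
  rcases eq_or_ne t 0 with rfl | ht0
  · rw [eq_one_of_pow_eq_one htf FiniteIndex.index_ne_zero (ht.symm.trans (zpow_zero n))]
    group
  have hconj : (g * n * g⁻¹) ^ t = n ^ t := by
    rw [← MulAut.conj_apply, ← map_zpow, MulAut.conj_apply, ht, (Commute.self_pow g _).eq,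
      mul_inv_cancel_right]
  exact mul_inv_eq_iff_eq_mul.mp
    (eq_of_commute_of_zpow_eq htf (hj ▸ (Commute.refl n).zpow_left j) ht0 hconj)

theorem commute_of_finiteIndex_center (htf : ∀ g : G, g ≠ 1 → ¬IsOfFinOrder g)
    [(center G).FiniteIndex] (a b : G) : Commute a b := by
  show a * b = b * a
  have hinj : Function.Injective (MonoidHom.transferCenterPow G) := by
    refine (injective_iff_map_eq_one _).mpr fun g hg ↦ eq_one_of_pow_eq_one htf
      (FiniteIndex.index_ne_zero (H := center G)) ?_
    rw [← MonoidHom.transferCenterPow_apply, hg, OneMemClass.coe_one]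
  exact hinj (by
    rw [map_mul, map_mul]
    exact Subtype.ext (mem_center_iff.mp (MonoidHom.transferCenterPow G b).2 _))

theorem isCyclic_of_isCyclic_normal_finiteIndex (htf : ∀ g : G, g ≠ 1 → ¬IsOfFinOrder g)
    (N : Subgroup G) [N.Normal] [N.FiniteIndex] [IsCyclic N] : IsCyclic G := by
  have : (center G).FiniteIndex := finiteIndex_of_le (le_center_of_isCyclic htf N)
  let powIndex : G →* N := MonoidHom.mk' (fun g ↦ ⟨g ^ N.index, N.pow_index_mem g⟩)
    fun a b ↦ Subtype.ext ((commute_of_finiteIndex_center htf a b).mul_pow _)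
  refine isCyclic_of_injective powIndex ((injective_iff_map_eq_one _).mpr fun g hg ↦ ?_)
  exact eq_one_of_pow_eq_one htf FiniteIndex.index_ne_zero (congrArg Subtype.val hg)

end TorsionFree

theorem stmt3_general {P : Type*} [Group P]
    (hvc : ∃ H : Subgroup P, H.FiniteIndex ∧ IsCyclic H)
    (htf : ∀ g : P, g ≠ 1 → ¬IsOfFinOrder g)
    (hinf : Infinite P) :
    Nonempty (P ≃* Multiplicative ℤ) := by
  obtain ⟨H, hH, hcyc⟩ := hvc
  have : IsCyclic H.normalCore := isCyclic_of_le H.normalCore_le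
  have : IsCyclic P := TorsionFree.isCyclic_of_isCyclic_normal_finiteIndex htf H.normalCore
  exact ⟨intCyclicMulEquiv.symm⟩

/-- A finitely generated, virtually cyclic, torsion-free, infinite
group is isomorphic to `ℤ`. -/
theorem stmt3 {P : Type*} [Group P] (hfg : Group.FG P)
    (hvc : ∃ H : Subgroup P, H.FiniteIndex ∧ IsCyclic H)
    (htf : ∀ g : P, g ≠ 1 → ¬IsOfFinOrder g)
    (hinf : Infinite P) :
    Nonempty (P ≃* Multiplicative ℤ) :=
  stmt3_general hvc htf hinf
end

section
/- Let P ≅ ℤ^{n-1} with n ≥ 2, let F be a finite subset of P \ {0}, let Ṗ ≤ P be a finite-index subgroup, and let f : P → ℤ be a nonzero homomorphism. Then there exists a subgroup N ≤ P with: N ≤ Ṗ, N ≤ ker(f), P/N virtually cyclic (in fact, N can be chosen so that P/N has a finite-index infinite cyclic subgroup), and N ∩ F = ∅. -/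
/-!
`ℤ^k` is residually finite, so some finite-index subgroup `M` misses `F`; take
`N = M ⊓ Ṗ ⊓ ker f`. If `f c` generates `f(P)`, then `P = ⟨c⟩ + ker f`, and since `N` has finite
index in `ker f`, the image of `⟨c⟩` has finite index in `P/N`. It is infinite cyclic because
`f` factors through `P/N` and does not vanish on `c`.
-/

open AddSubgroup

namespace AddGroup

instance residuallyFinite_int : ResiduallyFinite ℤ := by
  refine residuallyFinite_of_forall_exists_finite_addMonoidHom fun a ha =>
    ⟨ZMod (a.natAbs + 1), inferInstance, inferInstance, Int.castAddHom _, ?_⟩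
  intro h
  rw [Int.coe_castAddHom, ZMod.intCast_zmod_eq_zero_iff_dvd] at h
  exact ha (Int.eq_zero_of_dvd_of_natAbs_lt_natAbs h (by omega))

instance residuallyFinite_pi {ι : Type*} {G : ι → Type*} [∀ i, AddGroup (G i)]
    [∀ i, ResiduallyFinite (G i)] : ResiduallyFinite (∀ i, G i) := by
  rw [residuallyFinite_iff_forall_finiteIndexNormalAddSubgroup]
  intro g hg
  funext i
  exact eq_zero_iff_forall_finiteIndexNormalSubroup (g i) fun K =>
    hg (K.comap (Pi.evalAddMonoidHom G i))

theorem exists_finiteIndex_forall_notMem {G : Type*} [AddGroup G] [ResiduallyFinite G]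
    (F : Finset G) (hF : 0 ∉ F) : ∃ H : AddSubgroup G, H.FiniteIndex ∧ ∀ x ∈ F, x ∉ H := by
  have hsep : ∀ x ∈ F, ∃ H : AddSubgroup G, H.FiniteIndex ∧ x ∉ H := fun x hx =>
    residuallyFinite_iff_exists_finiteIndex.mp ‹_› x (ne_of_mem_of_not_mem hx hF)
  choose! H hH hxH using hsep
  refine ⟨⨅ x ∈ F, H x, finiteIndex_iInf' H hH, fun x hx hmem => hxH x hx ?_⟩
  exact mem_iInf.mp (mem_iInf.mp hmem x) hx

end AddGroup

theorem AddSubgroup.finiteIndex_of_inf_le_of_sup_eq_top {G : Type*} [AddGroup G]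
    {H K L : AddSubgroup G} [H.FiniteIndex] [L.Normal] (hHK : H ⊓ K ≤ L) (hKL : K ⊔ L = ⊤) :
    L.FiniteIndex := by
  have hK : (H ⊓ K).relIndex K ≠ 0 :=
    inf_relIndex_right H K ▸ (isFiniteRelIndex_of_finiteIndex (K := K)).relIndex_ne_zero
  refine ⟨?_⟩
  rw [← relIndex_top_right, ← hKL, relIndex_sup_right]
  exact ne_zero_of_dvd_ne_zero hK (relIndex_dvd_of_le_left K hHK)

theorem AddSubgroup.nonempty_zmultiples_addEquiv_int {G : Type*} [AddGroup G] {x : G}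
    (hx : ¬IsOfFinAddOrder x) : Nonempty (zmultiples x ≃+ ℤ) :=
  ⟨((AddMonoidHom.ofInjective (injective_zsmul_iff_not_isOfFinAddOrder.mpr hx)).trans
    (AddEquiv.addSubgroupCongr (range_zmultiplesHom x))).symm⟩

namespace AddMonoidHom

variable {G : Type*} [AddCommGroup G] (f : G →+ ℤ)

theorem exists_range_eq_zmultiples : ∃ c, f.range = zmultiples (f c) := by
  obtain ⟨g, hg⟩ := Int.subgroup_cyclic f.range
  obtain ⟨c, rfl⟩ : g ∈ f.range := hg ▸ subset_closure rfl
  exact ⟨c, by rw [hg, zmultiples_eq_closure]⟩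

theorem zmultiples_sup_ker_eq_top {c : G} (hc : f.range = zmultiples (f c)) :
    zmultiples c ⊔ f.ker = ⊤ := by
  refine eq_top_iff.mpr fun x _ => ?_
  have hx : f x ∈ zmultiples (f c) := hc ▸ f.mem_range.mpr ⟨x, rfl⟩
  obtain ⟨q, hq⟩ := mem_zmultiples_iff.mp hx
  refine mem_sup.mpr ⟨q • c, zsmul_mem (mem_zmultiples c) q, x - q • c, ?_, add_sub_cancel _ _⟩
  simp [← hq]

theorem exists_finiteIndex_addEquiv_int_quotient_inf_ker (hf : f ≠ 0) (H : AddSubgroup G)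
    [H.FiniteIndex] : ∃ C : AddSubgroup (G ⧸ H ⊓ f.ker), C.FiniteIndex ∧ Nonempty (C ≃+ ℤ) := by
  obtain ⟨c, hc⟩ := f.exists_range_eq_zmultiples
  have hfc : f c ≠ 0 := fun h => hf (range_eq_bot_iff.mp (by rw [hc, h, zmultiples_zero_eq_bot]))
  refine ⟨zmultiples (c : G ⧸ H ⊓ f.ker), ⟨?_⟩, nonempty_zmultiples_addEquiv_int ?_⟩
  · have hsup : f.ker ⊔ (zmultiples c ⊔ H ⊓ f.ker) = ⊤ := by
      rw [sup_left_comm, sup_eq_left.mpr (inf_le_right : H ⊓ f.ker ≤ f.ker),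
        f.zmultiples_sup_ker_eq_top hc]
    have hL : (zmultiples c ⊔ H ⊓ f.ker).FiniteIndex :=
      finiteIndex_of_inf_le_of_sup_eq_top (H := H) le_sup_right hsup
    rw [← QuotientAddGroup.coe_mk', ← AddMonoidHom.map_zmultiples, index_map,
      QuotientAddGroup.ker_mk', range_eq_top_of_surjective _ (QuotientAddGroup.mk'_surjective _),
      index_top, mul_one]
    exact hL.index_ne_zero
  · exact fun h => hfc ((QuotientAddGroup.lift _ f inf_le_right).isOfFinAddOrder h).eq_zero'

end AddMonoidHom

theorem stmt8_general (n : ℕ) (F : Finset (Fin (n - 1) → ℤ))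
    (hF : (0 : Fin (n - 1) → ℤ) ∉ F)
    (Pdot : AddSubgroup (Fin (n - 1) → ℤ)) (hPdot : Pdot.FiniteIndex)
    (f : (Fin (n - 1) → ℤ) →+ ℤ) (hf : f ≠ 0) :
    ∃ N : AddSubgroup (Fin (n - 1) → ℤ),
      N ≤ Pdot ∧ N ≤ f.ker ∧
      (∃ C : AddSubgroup ((Fin (n - 1) → ℤ) ⧸ N), C.FiniteIndex ∧
        Nonempty (C ≃+ ℤ)) ∧
      ∀ x ∈ F, x ∉ N := by
  obtain ⟨M, _, hMF⟩ := AddGroup.exists_finiteIndex_forall_notMem F hF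
  exact ⟨M ⊓ Pdot ⊓ f.ker, inf_le_left.trans inf_le_right, inf_le_right,
    f.exists_finiteIndex_addEquiv_int_quotient_inf_ker hf _, fun x hx hxN => hMF x hx hxN.1.1⟩

/-- For `P ≅ ℤ^{n-1}` (n ≥ 2), a finite set `F ⊆ P \ {0}`, a
finite-index subgroup `Ṗ ≤ P` and a nonzero homomorphism `f : P → ℤ`, there is
`N ≤ Ṗ` with `N ≤ ker f`, `P/N` virtually cyclic (indeed with a finite-index
infinite cyclic subgroup), and `N ∩ F = ∅`. -/
theorem stmt8 (n : ℕ) (hn : 2 ≤ n) (F : Finset (Fin (n - 1) → ℤ))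
    (hF : (0 : Fin (n - 1) → ℤ) ∉ F)
    (Pdot : AddSubgroup (Fin (n - 1) → ℤ)) (hPdot : Pdot.FiniteIndex)
    (f : (Fin (n - 1) → ℤ) →+ ℤ) (hf : f ≠ 0) :
    ∃ N : AddSubgroup (Fin (n - 1) → ℤ),
      N ≤ Pdot ∧ N ≤ f.ker ∧
      (∃ C : AddSubgroup ((Fin (n - 1) → ℤ) ⧸ N), C.FiniteIndex ∧
        Nonempty (C ≃+ ℤ)) ∧
      ∀ x ∈ F, x ∉ N :=
  stmt8_general n F hF Pdot hPdot f hf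
end
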